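/- arXiv:2401.12887 — 11 statements merged into one kernel-verified Lean document; each statement's English description precedes it below -/
import Mathlib

section
/- Let R be a finite commutative ring and let X be a (possibly infinite) set of variables. Let Φ be a set of polynomials in the variables X with coefficients in R (multivariate polynomials, each involving only finitely many variables). Then there exists an assignment u : X → R with f(u) = 0 for every f ∈ Φ if and only if for every finite subset Φ₀ of Φ there exists an assignment u₀ : X → R with f(u₀) = 0 for all f ∈ Φ₀. -/
/-- (Abian) Over a finite commutative ring, an arbitrary set of multivariate polynomials has a
common solution if and only if every finite subset has a common solution. -/
theorem stmt_1 {R : Type*} [CommRing R] [Finite R] {X : Type*}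
    (Φ : Set (MvPolynomial X R)) :
    (∃ u : X → R, ∀ f ∈ Φ, MvPolynomial.eval u f = 0) ↔
      (∀ Φ₀ : Finset (MvPolynomial X R), ↑Φ₀ ⊆ Φ →
        ∃ u : X → R, ∀ f ∈ Φ₀, MvPolynomial.eval u f = 0) := by
  constructor
  · rintro ⟨u, hu⟩ Φ₀ h
    exact ⟨u, fun f hf => hu f (h hf)⟩
  · intro hfin
    classical
    letI : TopologicalSpace R := ⊥
    haveI : DiscreteTopology R := ⟨rfl⟩
    haveI : CompactSpace R := Finite.compactSpace
    have hcont : ∀ f : MvPolynomial X R, Continuous fun u : X → R => MvPolynomial.eval u f := by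
      intro f
      induction f using MvPolynomial.induction_on with
      | C a => simpa using continuous_const
      | add p q hp hq => simp only [map_add]; exact hp.add hq
      | mul_X p n hp => simp only [map_mul, MvPolynomial.eval_X]; exact hp.mul (continuous_apply n)
    by_contra h
    push_neg at h
    have hempty : (Set.univ ∩ ⋂ f : Φ, {u : X → R | MvPolynomial.eval u (f : MvPolynomial X R) = 0}) = ∅ := by
      ext u
      simp only [Set.mem_inter_iff, Set.mem_iInter, Set.mem_empty_iff_false, iff_false]
      rintro ⟨-, hu⟩
      obtain ⟨f, hf, hne⟩ := h u
      exact hne (hu ⟨f, hf⟩)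
    obtain ⟨t, ht⟩ := IsCompact.elim_finite_subfamily_closed isCompact_univ
      (fun f : Φ => {u : X → R | MvPolynomial.eval u (f : MvPolynomial X R) = 0})
      (fun f => (isClosed_singleton (x := (0 : R))).preimage (hcont f)) hempty
    obtain ⟨u, hu⟩ := hfin (t.image Subtype.val) (by
      intro f hf
      obtain ⟨⟨g, hg⟩, -, rfl⟩ := Finset.mem_image.mp hf
      exact hg)
    have : u ∈ (Set.univ ∩ ⋂ f ∈ t, {u : X → R | MvPolynomial.eval u (f : MvPolynomial X R) = 0}) := by
      refine ⟨trivial, ?_⟩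
      simp only [Set.mem_iInter]
      intro f hf
      exact hu f (Finset.mem_image_of_mem Subtype.val hf)
    rw [ht] at this
    exact this
end

section
/- Let F be a field, let n be a positive integer, let I be an infinite index set, and for each i ∈ I let ℓ_i be the affine linear equation ∑_{j=1}^n a_{i,j} x_j + b_i = 0 with coefficients a_{i,j}, b_i ∈ F. If for every finite subset S of I there exists u ∈ Fⁿ satisfying ∑_{j=1}^n a_{i,j} u_j + b_i = 0 for all i ∈ S, then there exists u ∈ Fⁿ satisfying all the equations ℓ_i for i ∈ I. -/
/-- An infinite set of affine linear equations in `n` variables over a field has a common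
solution provided every finite subset of the equations has a common solution. -/
theorem stmt_5 {F : Type*} [Field F] (n : ℕ) (hn : 0 < n) {I : Type*} [Infinite I]
    (a : I → Fin n → F) (b : I → F)
    (h : ∀ S : Finset I, ∃ u : Fin n → F, ∀ i ∈ S, ∑ j, a i j * u j + b i = 0) :
    ∃ u : Fin n → F, ∀ i : I, ∑ j, a i j * u j + b i = 0 := by
  classical
  set v : I → (Fin n → F) × F := fun i => (a i, b i) with hv
  have hfg : (Submodule.span F (Set.range v)).FG := IsNoetherian.noetherian _
  obtain ⟨g, hg⟩ := hfg
  have hsub : ∀ x : (Fin n → F) × F, ∃ t : Set ((Fin n → F) × F),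
      t ⊆ Set.range v ∧ t.Finite ∧ (x ∈ Submodule.span F (Set.range v) →
        x ∈ Submodule.span F t) := by
    intro x
    by_cases hx : x ∈ Submodule.span F (Set.range v)
    · obtain ⟨t, h1, h3⟩ := Submodule.mem_span_finite_of_mem_span hx
      exact ⟨t, h1, t.finite_toSet, fun _ => h3⟩
    · exact ⟨∅, by simp, Set.finite_empty, fun hx' => absurd hx' hx⟩
  choose t ht1 ht2 ht3 using hsub
  set T : Set ((Fin n → F) × F) := ⋃ x ∈ (g : Set _), t x with hT
  have hTfin : T.Finite := Set.Finite.biUnion g.finite_toSet fun x _ => ht2 x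
  have hTsub : T ⊆ Set.range v := by
    intro y hy
    simp only [hT, Set.mem_iUnion] at hy
    obtain ⟨x, hx, hyx⟩ := hy
    exact ht1 x hyx
  -- span T equals span of all rows
  have hspan : Submodule.span F (Set.range v) ≤ Submodule.span F T := by
    rw [← hg]
    rw [Submodule.span_le]
    intro x hx
    have hxg : x ∈ Submodule.span F (Set.range v) := by
      rw [← hg]; exact Submodule.subset_span hx
    refine Submodule.span_mono ?_ (ht3 x hxg)
    exact Set.subset_biUnion_of_mem hx
  -- choose indices realizing T
  have hchoice : ∀ y ∈ T, ∃ i : I, v i = y := fun y hy => hTsub hy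
  choose idx hidx using hchoice
  set S : Finset I := hTfin.toFinset.attach.image
    (fun y => idx y.1 (hTfin.mem_toFinset.mp y.2)) with hS
  obtain ⟨u, hu⟩ := h S
  -- the linear functional determined by u
  set φ : ((Fin n → F) × F) →ₗ[F] F :=
    { toFun := fun p => ∑ j, p.1 j * u j + p.2
      map_add' := by intro p q; simp [add_mul, Finset.sum_add_distrib]; ring
      map_smul' := by intro c p; simp [Finset.mul_sum, mul_add, mul_assoc] } with hφ
  have hker : T ⊆ (LinearMap.ker φ : Set _) := by
    intro y hy
    have hiS : idx y hy ∈ S := by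
      simp only [hS, Finset.mem_image, Finset.mem_attach]
      exact ⟨⟨y, hTfin.mem_toFinset.mpr hy⟩, by simp⟩
    have := hu _ hiS
    simp only [SetLike.mem_coe, LinearMap.mem_ker]
    rw [← hidx y hy]
    simpa [hφ, hv] using this
  have hker' : Submodule.span F T ≤ LinearMap.ker φ := Submodule.span_le.mpr hker
  refine ⟨u, fun i => ?_⟩
  have : v i ∈ LinearMap.ker φ :=
    hker' (hspan (Submodule.subset_span (Set.mem_range_self i)))
  simpa [hφ, hv] using this
end

section
/- Let F be a field, let n be a positive integer, let I be a nonempty index set, and for each i ∈ I let ℓ_i be the affine linear equation ∑_{j=1}^n a_{i,j} x_j + b_i = 0 with coefficients a_{i,j}, b_i ∈ F. If every subset S ⊆ I of cardinality at most n + 1 admits a vector u ∈ Fⁿ with ∑_{j=1}^n a_{i,j} u_j + b_i = 0 for all i ∈ S, then there exists u ∈ Fⁿ satisfying all the equations ℓ_i for i ∈ I. -/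
/-- If every subset of cardinality at most `n + 1` of a family of affine linear equations in
`n` variables over a field has a common solution, then the whole family has a common
solution. -/
theorem stmt_6 {F : Type*} [Field F] (n : ℕ) (hn : 0 < n) {I : Type*} [Nonempty I]
    (a : I → Fin n → F) (b : I → F)
    (h : ∀ S : Finset I, S.card ≤ n + 1 →
      ∃ u : Fin n → F, ∀ i ∈ S, ∑ j, a i j * u j + b i = 0) :
    ∃ u : Fin n → F, ∀ i : I, ∑ j, a i j * u j + b i = 0 := by
  classical
  set f : I → ((Fin n → F) × F) := fun i => (a i, b i) with hf
  obtain ⟨t, hts, hspan, hli⟩ := exists_linearIndependent F (Set.range f)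
  have htfin : t.Finite := hli.setFinite
  have hcard : htfin.toFinset.card ≤ n + 1 := by
    haveI := htfin.fintype
    have h1 := hli.fintype_card_le_finrank
    simpa [Set.Finite.card_toFinset, Module.finrank_prod] using h1
  -- choose preimages
  have hchoice : ∀ x ∈ t, ∃ i : I, f i = x := fun x hx => hts hx
  choose g hg using hchoice
  set S : Finset I := htfin.toFinset.attach.image (fun x => g x.1 (htfin.mem_toFinset.mp x.2))
  obtain ⟨u, hu⟩ := h S (le_trans (Finset.card_image_le.trans (by simp)) hcard)
  -- the linear map u-evaluation
  set L : ((Fin n → F) × F) →ₗ[F] F :=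
    { toFun := fun p => ∑ j, p.1 j * u j + p.2
      map_add' := by
        intro p q
        simp [add_mul, Finset.sum_add_distrib]
        ring
      map_smul' := by
        intro c p
        simp [Finset.mul_sum, mul_add, mul_assoc] }
  have hker : ∀ x ∈ t, L x = 0 := by
    intro x hx
    have hgS : g x hx ∈ S := by
      simp only [S, Finset.mem_image]
      exact ⟨⟨x, by simpa using hx⟩, Finset.mem_attach _ _, rfl⟩
    have hux := hu _ hgS
    have hfx : f (g x hx) = x := hg x hx
    rw [← hfx]
    simpa [L, hf] using hux
  refine ⟨u, fun i => ?_⟩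
  have hmem : f i ∈ Submodule.span F t := by
    rw [hspan]; exact Submodule.subset_span ⟨i, rfl⟩
  have : Submodule.span F t ≤ LinearMap.ker L := by
    rw [Submodule.span_le]
    intro x hx
    simpa using hker x hx
  simpa [L, hf] using this hmem
end

section
/- Let R be a commutative Noetherian ring and let n be a positive integer. Let Φ be a set of polynomials in R[x_1,…,x_n]. If for every finite subset Φ₀ of Φ there exists u ∈ Rⁿ with f(u) = 0 for all f ∈ Φ₀, then there exists u ∈ Rⁿ with f(u) = 0 for all f ∈ Φ. -/
/-- Over a commutative Noetherian ring, if every finite subset of a set of polynomials in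
`n` variables has a common solution, then the whole set has a common solution. -/
theorem stmt_7 {R : Type*} [CommRing R] [IsNoetherianRing R] (n : ℕ) (hn : 0 < n)
    (Φ : Set (MvPolynomial (Fin n) R))
    (h : ∀ Φ₀ : Finset (MvPolynomial (Fin n) R), ↑Φ₀ ⊆ Φ →
      ∃ u : Fin n → R, ∀ f ∈ Φ₀, MvPolynomial.eval u f = 0) :
    ∃ u : Fin n → R, ∀ f ∈ Φ, MvPolynomial.eval u f = 0 := by
  have hfg : (Ideal.span Φ).FG := IsNoetherian.noetherian _
  obtain ⟨s, hs⟩ := hfg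
  -- each generator lies in the span of a finite subset of Φ
  have key : ∀ g ∈ (s : Set (MvPolynomial (Fin n) R)), ∃ t : Finset (MvPolynomial (Fin n) R),
      ↑t ⊆ Φ ∧ g ∈ Ideal.span (t : Set (MvPolynomial (Fin n) R)) := by
    intro g hg
    have : g ∈ Ideal.span Φ := hs ▸ Ideal.subset_span hg
    obtain ⟨t, ht, hgt⟩ := Submodule.mem_span_finite_of_mem_span this
    exact ⟨t, ht, hgt⟩
  choose! t ht hgt using key
  -- union of these finite subsets
  classical
  let T : Finset (MvPolynomial (Fin n) R) := s.biUnion (fun g => t g)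
  have hTΦ : (T : Set (MvPolynomial (Fin n) R)) ⊆ Φ := by
    intro f hf
    simp only [T, Finset.coe_biUnion, Set.mem_iUnion] at hf
    obtain ⟨g, hg, hfg⟩ := hf
    exact ht g hg hfg
  have hspan : Ideal.span Φ ≤ Ideal.span (T : Set (MvPolynomial (Fin n) R)) := by
    rw [← hs, Ideal.span_le]
    intro g hg
    refine Ideal.span_mono ?_ (hgt g hg)
    intro f hf
    simp only [T, Finset.coe_biUnion, Set.mem_iUnion]
    exact ⟨g, hg, hf⟩
  obtain ⟨u, hu⟩ := h T hTΦ
  refine ⟨u, fun f hf => ?_⟩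
  have hmem : f ∈ Ideal.span (T : Set (MvPolynomial (Fin n) R)) :=
    hspan (Ideal.subset_span hf)
  have : f ∈ RingHom.ker (MvPolynomial.eval u) := by
    refine Ideal.span_le.mpr ?_ hmem
    intro g hg
    exact hu g hg
  exact this
end

section
/- (Abian) Let F be a field and let I and J be infinite sets. For each i ∈ I, let a_i : J → F be a function with a_i(j) ≠ 0 for only finitely many j ∈ J (a finitely supported function), and let b_i ∈ F; consider the linear equation ∑_{j∈J} a_i(j) x_j + b_i = 0. If for every finite subset I₀ of I there exists an assignment u : J → F with ∑_{j∈J} a_i(j) u(j) + b_i = 0 for all i ∈ I₀, then there exists an assignment u : J → F with ∑_{j∈J} a_i(j) u(j) + b_i = 0 for all i ∈ I. -/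
/-- (Abian) An infinite family of linear equations over a field, each in finitely many of an
infinite set of variables, has a common solution provided every finite subfamily has a common
solution. -/
theorem stmt_8 {F : Type*} [Field F] {I J : Type*} [Infinite I] [Infinite J]
    (a : I → (J →₀ F)) (b : I → F)
    (h : ∀ I₀ : Finset I, ∃ u : J → F,
      ∀ i ∈ I₀, ((a i).sum fun j c => c * u j) + b i = 0) :
    ∃ u : J → F, ∀ i : I, ((a i).sum fun j c => c * u j) + b i = 0 := by
  classical
  set T : (I →₀ F) →ₗ[F] (J →₀ F) := Finsupp.linearCombination F a with hT
  set B : (I →₀ F) →ₗ[F] F := Finsupp.linearCombination F b with hB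
  have hker : LinearMap.ker T ≤ LinearMap.ker (-B) := by
    intro c hc
    obtain ⟨u, hu⟩ := h c.support
    have hu' : ∀ i ∈ c.support, ((a i).sum fun j d => d * u j) = - b i :=
      fun i hi => eq_neg_of_add_eq_zero_left (hu i hi)
    have hTc : T c = 0 := hc
    let φ : (J →₀ F) →ₗ[F] F := Finsupp.linearCombination F u
    have hφa : ∀ i, φ (a i) = (a i).sum fun j d => d * u j := by
      intro i; simp [φ, Finsupp.linearCombination_apply, smul_eq_mul]
    have hfun : φ (T c) = 0 := by rw [hTc]; simp
    have hTc' : T c = c.sum fun i d => d • a i := by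
      rw [hT, Finsupp.linearCombination_apply]
    have expand : φ (T c) = c.sum fun i d => d * φ (a i) := by
      rw [hTc', map_finsuppSum]
      simp [smul_eq_mul]
    simp only [LinearMap.mem_ker, LinearMap.neg_apply, neg_eq_zero, hB,
      Finsupp.linearCombination_apply]
    rw [expand] at hfun
    rw [← neg_eq_zero, ← hfun, ← Finsupp.sum_neg]
    apply Finsupp.sum_congr
    intro i hi
    rw [hφa, hu' i hi, smul_eq_mul]; ring
  -- factor -B through the range of T
  let g₀ : (LinearMap.range T) →ₗ[F] F :=
    (Submodule.liftQ (LinearMap.ker T) (-B) hker).comp T.quotKerEquivRange.symm.toLinearMap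
  obtain ⟨f, hf⟩ := LinearMap.exists_extend g₀
  have hfa : ∀ i, f (a i) = - b i := by
    intro i
    have h1 : a i = T (Finsupp.single i 1) := by
      simp [hT, Finsupp.linearCombination_single]
    have h2 : (⟨a i, by rw [h1]; exact LinearMap.mem_range_self T _⟩ : LinearMap.range T)
        = ⟨T (Finsupp.single i 1), LinearMap.mem_range_self T _⟩ := by
      simp [h1]
    calc f (a i) = g₀ ⟨a i, by rw [h1]; exact LinearMap.mem_range_self T _⟩ := by
          rw [← hf]; rfl
      _ = - b i := by
          rw [h2]
          show (Submodule.liftQ (LinearMap.ker T) (-B) hker)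
            (T.quotKerEquivRange.symm ⟨T (Finsupp.single i 1), _⟩) = _
          rw [LinearMap.quotKerEquivRange_symm_apply_image]
          simp [hB, Finsupp.linearCombination_single]
  refine ⟨fun j => f (Finsupp.single j 1), fun i => ?_⟩
  have : ((a i).sum fun j c => c * f (Finsupp.single j 1)) = f (a i) := by
    conv_rhs => rw [← Finsupp.sum_single (a i)]
    rw [map_finsuppSum]
    apply Finsupp.sum_congr
    intro j _
    rw [← smul_eq_mul, ← map_smul, Finsupp.smul_single, smul_eq_mul, mul_one]
  rw [this, hfa]; ring
end

section
/- (Riesz; Abian–Eslami) Let p > 1 and q satisfy 1/p + 1/q = 1, let I be an infinite index set, and for each i ∈ I let a_i = (a_{i,j})_{j=1}^∞ ∈ ℓ^p and b_i ∈ ℝ. Let M > 0. If for every finite subset I₀ of I there exists u ∈ ℓ^q with ‖u‖_q ≤ M and ∑_{j=1}^∞ a_{i,j} u_j = b_i for all i ∈ I₀, then there exists u ∈ ℓ^q with ‖u‖_q ≤ M and ∑_{j=1}^∞ a_{i,j} u_j = b_i for all i ∈ I. -/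
open Filter Finset
open scoped ENNReal Topology
set_option maxHeartbeats 1000000

/-- (Riesz; Abian–Eslami) If every finite subfamily of an infinite family of linear equations
`∑_{j=1}^∞ a_{i,j} x_j = b_i`, with `a_i ∈ ℓ^p`, has a solution `u ∈ ℓ^q` of norm at most `M`,
then the whole family has a solution `u ∈ ℓ^q` of norm at most `M`. Here `p > 1` and
`1/p + 1/q = 1`. -/
theorem stmt_10 (p q : ℝ) (hp : 1 < p) (hpq : 1 / p + 1 / q = 1)
    {I : Type*} [Infinite I] (a : I → ℕ → ℝ) (b : I → ℝ)
    (ha : ∀ i, Memℓp (a i) (ENNReal.ofReal p)) (M : ℝ) (hM : 0 < M)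
    (h : ∀ I₀ : Finset I, ∃ u : ℕ → ℝ, Memℓp u (ENNReal.ofReal q) ∧
      (∑' j, |u j| ^ q) ^ (1 / q) ≤ M ∧ ∀ i ∈ I₀, ∑' j, a i j * u j = b i) :
    ∃ u : ℕ → ℝ, Memℓp u (ENNReal.ofReal q) ∧
      (∑' j, |u j| ^ q) ^ (1 / q) ≤ M ∧ ∀ i : I, ∑' j, a i j * u j = b i := by
  classical
  have hpq' : p.HolderConjugate q := Real.holderConjugate_iff.mpr ⟨hp, by rw [← one_div, ← one_div]; exact hpq⟩
  have hq1 : 1 < q := hpq'.symm.lt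
  have hq0 : 0 < q := by linarith
  have hp0 : 0 < p := by linarith
  set q' : ℝ≥0∞ := ENNReal.ofReal q with hq'def
  set p' : ℝ≥0∞ := ENNReal.ofReal p with hp'def
  have hq't : q'.toReal = q := ENNReal.toReal_ofReal hq0.le
  have hp't : p'.toReal = p := ENNReal.toReal_ofReal hp0.le
  have hq'pos : 0 < q'.toReal := by rw [hq't]; exact hq0
  have hp'pos : 0 < p'.toReal := by rw [hp't]; exact hp0
  have hconj : p'.toReal.HolderConjugate q'.toReal := by rw [hp't, hq't]; exact hpq'
  haveI : Fact (1 ≤ q') := ⟨by rw [hq'def]; exact ENNReal.one_le_ofReal.mpr hq1.le⟩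
  haveI : Fact (1 ≤ p') := ⟨by rw [hp'def]; exact ENNReal.one_le_ofReal.mpr hp.le⟩
  choose U hU1 hU2 hU3 using h
  let F : Finset I → lp (fun _ : ℕ => ℝ) q' := fun s => ⟨U s, hU1 s⟩
  have hFnorm : ∀ s, ‖F s‖ ≤ M := by
    intro s
    rw [lp.norm_eq_tsum_rpow hq'pos]
    simpa [Real.norm_eq_abs, hq't] using hU2 s
  -- an ultrafilter refining `atTop` on `Finset I`
  let 𝒰 : Ultrafilter (Finset I) := Ultrafilter.of atTop
  have h𝒰 : (𝒰 : Filter (Finset I)) ≤ atTop := Ultrafilter.of_le _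
  -- pointwise coordinates live in the compact set `Π j, [-M, M]`
  have hKc : IsCompact (Set.pi Set.univ fun _ : ℕ => Set.Icc (-M) M) :=
    isCompact_univ_pi fun _ => isCompact_Icc
  have hmemK : ∀ s : Finset I, (U s : ℕ → ℝ) ∈ Set.pi Set.univ fun _ : ℕ => Set.Icc (-M) M := by
    intro s j _
    have h1 : ‖U s j‖ ≤ ‖F s‖ := lp.norm_apply_le_norm (by simp [hq'def, hq0]) (F s) j
    have h2 : |U s j| ≤ M := by
      rw [Real.norm_eq_abs] at h1; exact h1.trans (hFnorm s)
    exact abs_le.mp h2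
  obtain ⟨f, -, hf⟩ := hKc.ultrafilter_le_nhds (𝒰.map fun s => (U s : ℕ → ℝ))
    (by
      simp only [le_principal_iff, Ultrafilter.mem_coe, Ultrafilter.mem_map]
      exact Filter.univ_mem' fun s => hmemK s)
  have hftend : Tendsto (fun s => (U s : ℕ → ℝ)) (𝒰 : Filter (Finset I)) (𝓝 f) := by
    rw [Tendsto, ← Ultrafilter.coe_map]; exact hf
  -- `f` is in `ℓ^q` with norm at most `M`
  have hFbdd : Bornology.IsBounded (Set.range F) := by
    refine (Metric.isBounded_closedBall (x := (0 : lp (fun _ : ℕ => ℝ) q')) (r := M)).subset ?_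
    rintro - ⟨s, rfl⟩
    simpa [Metric.mem_closedBall, dist_zero_right] using hFnorm s
  have memf : Memℓp f q' := lp.memℓp_of_tendsto hFbdd hftend
  have hgnorm : ‖(⟨f, memf⟩ : lp (fun _ : ℕ => ℝ) q')‖ ≤ M :=
    lp.norm_le_of_tendsto (Eventually.of_forall hFnorm) hftend
  have hfnorm : (∑' j, |f j| ^ q) ^ (1 / q) ≤ M := by
    rw [lp.norm_eq_tsum_rpow hq'pos] at hgnorm
    simpa [Real.norm_eq_abs, hq't] using hgnorm
  refine ⟨f, memf, hfnorm, fun i => ?_⟩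
  -- Hölder tail estimate, uniform over solutions of norm ≤ M
  have haisum : Summable fun j => ‖a i j‖ ^ p := by
    have := (ha i).summable hp'pos
    rwa [hp't] at this
  have key : ∀ ε > (0 : ℝ), ∃ N : ℕ, ∀ (w : ℕ → ℝ) (hw : Memℓp w q'),
      ‖(⟨w, hw⟩ : lp (fun _ : ℕ => ℝ) q')‖ ≤ M →
      |∑' j, a i j * w j - ∑ j ∈ Finset.range N, a i j * w j| ≤ ε := by
    intro ε hε
    have hδ : 0 < ε / M := div_pos hε hM
    have htail : Tendsto (fun N => ∑' j, ‖a i (j + N)‖ ^ p) atTop (𝓝 0) :=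
      tendsto_sum_nat_add fun j => ‖a i j‖ ^ p
    have hδp : 0 < (ε / M) ^ p := Real.rpow_pos_of_pos hδ p
    obtain ⟨N, hN⟩ := (htail.eventually (eventually_lt_nhds hδp)).exists
    refine ⟨N, fun w hw hwM => ?_⟩
    -- shifted sequences
    have memA : Memℓp (fun j => a i (j + N)) p' := by
      apply memℓp_gen
      rw [hp't]
      exact (summable_nat_add_iff N).mpr haisum
    have memW : Memℓp (fun j => w (j + N)) q' := by
      apply memℓp_gen
      exact (summable_nat_add_iff N).mpr (hw.summable hq'pos)
    set A : lp (fun _ : ℕ => ℝ) p' := ⟨fun j => a i (j + N), memA⟩ with hA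
    set W : lp (fun _ : ℕ => ℝ) q' := ⟨fun j => w (j + N), memW⟩ with hW
    have hAnorm : ‖A‖ ≤ ε / M := by
      apply lp.norm_le_of_tsum_le hp'pos hδ.le
      rw [hp't]
      exact (hN).le
    have hWnorm : ‖W‖ ≤ M := by
      apply lp.norm_le_of_tsum_le hq'pos hM.le
      have hsq : Summable fun j => ‖w j‖ ^ q'.toReal := hw.summable hq'pos
      have hsplit := Summable.sum_add_tsum_nat_add (f := fun j => ‖w j‖ ^ q'.toReal) N hsq
      have hhead : 0 ≤ ∑ j ∈ Finset.range N, ‖w j‖ ^ q'.toReal :=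
        Finset.sum_nonneg fun j _ => Real.rpow_nonneg (norm_nonneg _) _
      have htot : ∑' j, ‖w j‖ ^ q'.toReal ≤ M ^ q'.toReal := by
        have hnr := lp.norm_rpow_eq_tsum hq'pos (⟨w, hw⟩ : lp (fun _ : ℕ => ℝ) q')
        have h1 : ∑' j, ‖w j‖ ^ q'.toReal
            = ‖(⟨w, hw⟩ : lp (fun _ : ℕ => ℝ) q')‖ ^ q'.toReal := by exact hnr.symm
        rw [h1]
        exact Real.rpow_le_rpow (norm_nonneg _) hwM hq'pos.le
      have : (∑' j, ‖w (j + N)‖ ^ q'.toReal) ≤ ∑' j, ‖w j‖ ^ q'.toReal := by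
        rw [← hsplit]; linarith
      exact this.trans htot
    -- summability of the series
    have habs : Summable fun j => ‖a i j‖ * ‖w j‖ :=
      lp.summable_mul hconj ⟨a i, ha i⟩ ⟨w, hw⟩
    have hsum : Summable fun j => a i j * w j := by
      apply Summable.of_norm
      simpa [norm_mul] using habs
    have hsplit := Summable.sum_add_tsum_nat_add (f := fun j => a i j * w j) N hsum
    have heq : ∑' j, a i j * w j - ∑ j ∈ Finset.range N, a i j * w j
        = ∑' j, a i (j + N) * w (j + N) := by
      rw [← hsplit]; ring
    rw [heq]
    have habs' : Summable fun j => ‖a i (j + N) * w (j + N)‖ := by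
      simpa [norm_mul] using (summable_nat_add_iff N).mpr habs
    calc |∑' j, a i (j + N) * w (j + N)| ≤ ∑' j, ‖a i (j + N) * w (j + N)‖ := by
          simpa [Real.norm_eq_abs] using norm_tsum_le_tsum_norm habs'
      _ = ∑' j, ‖A j‖ * ‖W j‖ := by simp [hA, hW, norm_mul]
      _ ≤ ‖A‖ * ‖W‖ := lp.tsum_mul_le_mul_norm' hconj A W
      _ ≤ (ε / M) * M := by
          apply mul_le_mul hAnorm hWnorm (norm_nonneg _) hδ.le
      _ = ε := div_mul_cancel₀ ε hM.ne'
  -- conclude the equation for index `i`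
  by_contra hne
  set d := |∑' j, a i j * f j - b i| with hd
  have hdpos : 0 < d := abs_pos.mpr (sub_ne_zero.mpr hne)
  obtain ⟨N, hNkey⟩ := key (d / 4) (by linarith)
  -- along the ultrafilter: finite sums converge, and eventually `i ∈ s`
  have htendfin : Tendsto (fun s => ∑ j ∈ Finset.range N, a i j * U s j)
      (𝒰 : Filter (Finset I)) (𝓝 (∑ j ∈ Finset.range N, a i j * f j)) := by
    apply tendsto_finset_sum
    intro j _
    have hcoord : Tendsto (fun s => U s j) (𝒰 : Filter (Finset I)) (𝓝 (f j)) := by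
      have := tendsto_pi_nhds.mp hftend j
      exact this
    exact hcoord.const_mul _
  have hev1 : ∀ᶠ s in (𝒰 : Filter (Finset I)),
      |∑ j ∈ Finset.range N, a i j * U s j - ∑ j ∈ Finset.range N, a i j * f j| < d / 4 := by
    have h4 : (0:ℝ) < d / 4 := by linarith
    have := Metric.tendsto_nhds.mp htendfin (d / 4) h4
    refine this.mono fun s hs => ?_
    simpa [Real.dist_eq] using hs
  have hev2 : ∀ᶠ s in (𝒰 : Filter (Finset I)), i ∈ s :=
    h𝒰 (eventually_ge_atTop {i} |>.mono fun s hs => hs (Finset.mem_singleton_self i))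
  obtain ⟨s, hs1, hs2⟩ := (hev1.and hev2).exists
  have e1 := hNkey f memf hgnorm
  have e2 := hNkey (U s) (hU1 s) (hFnorm s)
  have e3 : ∑' j, a i j * U s j = b i := hU3 s i hs2
  have : d ≤ d / 4 + d / 4 + d / 4 := by
    calc d = |∑' j, a i j * f j - b i| := hd
      _ = |(∑' j, a i j * f j - ∑ j ∈ Finset.range N, a i j * f j)
            + (∑ j ∈ Finset.range N, a i j * f j - ∑ j ∈ Finset.range N, a i j * U s j)
            + (∑ j ∈ Finset.range N, a i j * U s j - ∑' j, a i j * U s j)| := by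
          rw [e3]; ring_nf
      _ ≤ |∑' j, a i j * f j - ∑ j ∈ Finset.range N, a i j * f j|
            + |∑ j ∈ Finset.range N, a i j * f j - ∑ j ∈ Finset.range N, a i j * U s j|
            + |∑ j ∈ Finset.range N, a i j * U s j - ∑' j, a i j * U s j| :=
          (abs_add_three _ _ _)
      _ ≤ d / 4 + d / 4 + d / 4 := by
          refine add_le_add (add_le_add e1 ?_) ?_
          · rw [abs_sub_comm]; exact hs1.le
          · rw [abs_sub_comm]; exact e2
  linarith
end

section
/- (Nathanson–Ross) Let d be a positive integer and let q > d be a real number. For all i ∈ ℕ and k ∈ {1,…,d}, let (a_{i,j,k})_{j=1}^∞ be a real sequence belonging to ℓ^{q/(q−k)}, and define the polynomials f_{i,j}(x) = ∑_{k=1}^d a_{i,j,k} x^k. Let (b_i)_{i=1}^∞ be a sequence of real numbers and let M > 0. Then there exists u = (u_j)_{j=1}^∞ ∈ ℓ^q with ‖u‖_q ≤ M and ∑_{j=1}^∞ f_{i,j}(u_j) = b_i for all i ∈ ℕ if and only if for every finite subset I₀ of ℕ there exists u⁰ ∈ ℓ^q with ‖u⁰‖_q ≤ M and ∑_{j=1}^∞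 f_{i,j}(u⁰_j) = b_i for all i ∈ I₀. -/
set_option maxHeartbeats 2000000

open Filter Finset Real Topology

private lemma tail_holder {q : ℝ} {k : ℕ} (hk : 0 < k) (hkq : (k : ℝ) < q)
    {c u : ℕ → ℝ} (hc : Summable fun j => |c j| ^ (q / (q - k)))
    (hu : Summable fun j => |u j| ^ q) {Mq : ℝ}
    (huM : ∑' j, |u j| ^ q ≤ Mq) (N : ℕ) :
    (Summable fun j => |c (j + N)| * |u (j + N)| ^ k) ∧
      ∑' j, |c (j + N)| * |u (j + N)| ^ k ≤
        (∑' j, |c (j + N)| ^ (q / (q - k))) ^ ((q - k) / q) * Mq ^ ((k : ℝ) / q) := by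
  have hk0 : (0 : ℝ) < k := by exact_mod_cast hk
  have hq0 : 0 < q := lt_trans hk0 hkq
  have hqk : 0 < q - k := sub_pos.2 hkq
  have hconj : Real.HolderConjugate (q / (q - k)) (q / k) := by
    rw [Real.holderConjugate_iff]
    constructor
    · rw [lt_div_iff₀ hqk]; linarith
    · rw [inv_div, inv_div]; field_simp; ring
  have hcN : Summable fun j => |c (j + N)| ^ (q / (q - k)) := (summable_nat_add_iff N).2 hc
  have huN : Summable fun j => |u (j + N)| ^ q := (summable_nat_add_iff N).2 hu
  have hg : ∀ j : ℕ, (|u (j + N)| ^ k) ^ (q / k) = |u (j + N)| ^ q := by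
    intro j
    rw [← Real.rpow_natCast (|u (j + N)|) k, ← Real.rpow_mul (abs_nonneg _)]
    congr 1
    field_simp
  have key := Real.summable_and_inner_le_Lp_mul_Lq_tsum_of_nonneg (f := fun j => |c (j + N)|)
      (g := fun j => |u (j + N)| ^ k) hconj (fun j => abs_nonneg _)
      (fun j => by positivity) hcN (by simpa only [hg] using huN)
  refine ⟨key.1, key.2.trans ?_⟩
  have h1 : (1 : ℝ) / (q / (q - k)) = (q - k) / q := one_div_div _ _
  have h2 : (1 : ℝ) / (q / k) = (k : ℝ) / q := one_div_div _ _
  rw [h1, h2]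
  have hbound : ∑' j, (|u (j + N)| ^ k) ^ (q / k) ≤ Mq := by
    calc ∑' j, (|u (j + N)| ^ k) ^ (q / k) = ∑' j, |u (j + N)| ^ q := by simp_rw [hg]
      _ ≤ ∑' j, |u j| ^ q := Summable.tsum_le_tsum_of_inj (· + N) (add_left_injective N)
          (fun m _ => Real.rpow_nonneg (abs_nonneg _) _) (fun j => le_rfl) huN hu
      _ ≤ Mq := huM
  refine mul_le_mul_of_nonneg_left ?_
    (Real.rpow_nonneg (tsum_nonneg fun j => Real.rpow_nonneg (abs_nonneg _) _) _)
  exact Real.rpow_le_rpow (tsum_nonneg fun j => Real.rpow_nonneg (pow_nonneg (abs_nonneg _) _) _)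
    hbound (by positivity)

/-- (Nathanson–Ross) Let `d ≥ 1`, `q > d`, and for each `i` and `1 ≤ k ≤ d` let
`(a_{i,j,k})_j ∈ ℓ^{q/(q-k)}`.  The infinite system of polynomial equations
`∑_{j=1}^∞ ∑_{k=1}^d a_{i,j,k} x_j^k = b_i` has a solution `u ∈ ℓ^q` with `‖u‖_q ≤ M`
if and only if every finite subsystem has such a solution. -/
theorem stmt_11 (d : ℕ) (hd : 0 < d) (q : ℝ) (hq : (d : ℝ) < q)
    (a : ℕ → ℕ → ℕ → ℝ)
    (ha : ∀ i : ℕ, ∀ k ∈ Finset.Icc 1 d,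
      Memℓp (fun j => a i j k) (ENNReal.ofReal (q / (q - k))))
    (b : ℕ → ℝ) (M : ℝ) (hM : 0 < M) :
    (∃ u : ℕ → ℝ, Memℓp u (ENNReal.ofReal q) ∧ (∑' j, |u j| ^ q) ^ (1 / q) ≤ M ∧
      ∀ i : ℕ, ∑' j, ∑ k ∈ Finset.Icc 1 d, a i j k * u j ^ k = b i) ↔
    (∀ I₀ : Finset ℕ, ∃ u : ℕ → ℝ, Memℓp u (ENNReal.ofReal q) ∧
      (∑' j, |u j| ^ q) ^ (1 / q) ≤ M ∧
      ∀ i ∈ I₀, ∑' j, ∑ k ∈ Finset.Icc 1 d, a i j k * u j ^ k = b i) := by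
  have hd0 : (0 : ℝ) < d := by exact_mod_cast hd
  have hq0 : (0 : ℝ) < q := lt_trans hd0 hq
  constructor
  · rintro ⟨u, h1, h2, h3⟩ I₀
    exact ⟨u, h1, h2, fun i _ => h3 i⟩
  intro h
  -- the compact constraint set
  set K : Set (ℕ → ℝ) := {u | ∀ F : Finset ℕ, ∑ j ∈ F, |u j| ^ q ≤ M ^ q} with hKdef
  have hKsum : ∀ u ∈ K, Summable fun j => |u j| ^ q := fun u hu =>
    summable_of_sum_le (fun j => Real.rpow_nonneg (abs_nonneg _) _) hu
  have hKt : ∀ u ∈ K, ∑' j, |u j| ^ q ≤ M ^ q := fun u hu =>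
    Summable.tsum_le_of_sum_le (hKsum u hu) hu
  -- solutions lie in K
  have hmem : ∀ u : ℕ → ℝ, Memℓp u (ENNReal.ofReal q) →
      (∑' j, |u j| ^ q) ^ (1 / q) ≤ M → u ∈ K := by
    intro u h1 h2 F
    have hs : Summable fun j => |u j| ^ q := by
      have := h1.summable (by rw [ENNReal.toReal_ofReal hq0.le]; exact hq0)
      simpa [Real.norm_eq_abs, ENNReal.toReal_ofReal hq0.le] using this
    have h0 : (0 : ℝ) ≤ ∑' j, |u j| ^ q := tsum_nonneg fun j => by positivity
    have ht : ∑' j, |u j| ^ q ≤ M ^ q := by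
      have := Real.rpow_le_rpow (Real.rpow_nonneg h0 _) h2 hq0.le
      rwa [← Real.rpow_mul h0, one_div_mul_cancel hq0.ne', Real.rpow_one] at this
    exact le_trans (Summable.sum_le_tsum F (fun j _ => by positivity) hs) ht
  -- members of K give the required data
  have hmem' : ∀ u ∈ K, Memℓp u (ENNReal.ofReal q) ∧ (∑' j, |u j| ^ q) ^ (1 / q) ≤ M := by
    intro u hu
    have hs := hKsum u hu
    constructor
    · apply memℓp_gen
      rw [ENNReal.toReal_ofReal hq0.le]
      simpa [Real.norm_eq_abs] using hs
    · have := Real.rpow_le_rpow (tsum_nonneg fun j => by positivity) (hKt u hu)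
        (by positivity : (0 : ℝ) ≤ 1 / q)
      rwa [← Real.rpow_mul hM.le, mul_one_div_cancel hq0.ne', Real.rpow_one] at this
  -- K is closed and compact
  have hKcl : IsClosed K := by
    have hKeq : K = ⋂ F : Finset ℕ, {u : ℕ → ℝ | ∑ j ∈ F, |u j| ^ q ≤ M ^ q} := by
      ext u; simp [hKdef, Set.mem_iInter]
    rw [hKeq]
    refine isClosed_iInter fun F => isClosed_le ?_ continuous_const
    exact continuous_finset_sum F fun j _ =>
      ((continuous_apply j).abs).rpow_const (fun u => Or.inr hq0.le)
  have hKc : IsCompact K := by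
    refine (isCompact_univ_pi fun _ : ℕ => isCompact_Icc (a := -M) (b := M)).of_isClosed_subset
      hKcl ?_
    intro u hu
    rw [Set.mem_univ_pi]
    intro j
    have h1 : |u j| ^ q ≤ M ^ q := by simpa using hu {j}
    have h2 := Real.rpow_le_rpow (by positivity) h1 (by positivity : (0 : ℝ) ≤ 1 / q)
    rw [← Real.rpow_mul (abs_nonneg _), ← Real.rpow_mul hM.le, mul_one_div_cancel hq0.ne',
      Real.rpow_one, Real.rpow_one] at h2
    exact Set.mem_Icc.2 (abs_le.1 h2)
  -- summability of the coefficient sequences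
  have hA : ∀ i, ∀ k ∈ Finset.Icc 1 d, Summable fun j => |a i j k| ^ (q / (q - k)) := by
    intro i k hk
    obtain ⟨hk1, hk2⟩ := Finset.mem_Icc.1 hk
    have hkq : (k : ℝ) < q := lt_of_le_of_lt (by exact_mod_cast hk2) hq
    have hr : 0 < q / (q - k) := div_pos hq0 (by linarith)
    have := (ha i k hk).summable (by rw [ENNReal.toReal_ofReal hr.le]; exact hr)
    simpa [Real.norm_eq_abs, ENNReal.toReal_ofReal hr.le] using this
  have hkq' : ∀ k ∈ Finset.Icc 1 d, 0 < k ∧ (k : ℝ) < q := by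
    intro k hk
    obtain ⟨hk1, hk2⟩ := Finset.mem_Icc.1 hk
    exact ⟨hk1, lt_of_le_of_lt (by exact_mod_cast hk2) hq⟩
  -- summability of the term sequences on K
  have hmaj : ∀ i, ∀ u ∈ K, ∀ N : ℕ,
      Summable fun j => ∑ k ∈ Finset.Icc 1 d, |a i (j + N) k| * |u (j + N)| ^ k := by
    intro i u hu N
    refine summable_sum fun k hk => ?_
    exact (tail_holder (hkq' k hk).1 (hkq' k hk).2 (hA i k hk) (hKsum u hu) (hKt u hu) N).1
  have hGsummable : ∀ i, ∀ u ∈ K,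
      Summable fun j => ∑ k ∈ Finset.Icc 1 d, a i j k * u j ^ k := by
    intro i u hu
    apply Summable.of_norm_bounded (by simpa using hmaj i u hu 0)
    intro j
    rw [Real.norm_eq_abs]
    calc |∑ k ∈ Finset.Icc 1 d, a i j k * u j ^ k|
        ≤ ∑ k ∈ Finset.Icc 1 d, |a i j k * u j ^ k| := Finset.abs_sum_le_sum_abs _ _
      _ = ∑ k ∈ Finset.Icc 1 d, |a i j k| * |u j| ^ k := by
          refine Finset.sum_congr rfl fun k _ => ?_
          rw [abs_mul, abs_pow]
  -- continuity on K
  have hGcont : ∀ i, ContinuousOn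
      (fun u : ℕ → ℝ => ∑' j, ∑ k ∈ Finset.Icc 1 d, a i j k * u j ^ k) K := by
    intro i
    have hunif : TendstoUniformlyOn
        (fun N u => ∑ j ∈ Finset.range N, ∑ k ∈ Finset.Icc 1 d, a i j k * u j ^ k)
        (fun u => ∑' j, ∑ k ∈ Finset.Icc 1 d, a i j k * u j ^ k) atTop K := by
      rw [Metric.tendstoUniformlyOn_iff]
      intro ε hε
      set B : ℕ → ℝ := fun N => ∑ k ∈ Finset.Icc 1 d,
        (∑' j, |a i (j + N) k| ^ (q / (q - k))) ^ ((q - k) / q) * (M ^ q) ^ ((k : ℝ) / q)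
        with hBdef
      have hB0 : Tendsto B atTop (𝓝 0) := by
        have hBk : ∀ k ∈ Finset.Icc 1 d, Tendsto (fun N =>
            (∑' j, |a i (j + N) k| ^ (q / (q - k))) ^ ((q - k) / q) * (M ^ q) ^ ((k : ℝ) / q))
            atTop (𝓝 0) := by
          intro k hk
          have he : 0 < (q - k) / q := div_pos (by linarith [(hkq' k hk).2]) hq0
          have h1 : Tendsto (fun N => ∑' j, |a i (j + N) k| ^ (q / (q - k))) atTop (𝓝 0) :=
            tendsto_sum_nat_add (fun j => |a i j k| ^ (q / (q - k)))
          have h2 := (h1.rpow_const (Or.inr he.le)).mul_const ((M ^ q) ^ ((k : ℝ) / q))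
          rwa [Real.zero_rpow he.ne', zero_mul] at h2
        have := tendsto_finset_sum (Finset.Icc 1 d) hBk
        simpa using this
      filter_upwards [hB0.eventually (gt_mem_nhds hε)] with N hN u hu
      have hsum := hGsummable i u hu
      have hshift : Summable fun j => ∑ k ∈ Finset.Icc 1 d, a i (j + N) k * u (j + N) ^ k :=
        (summable_nat_add_iff N).2 hsum
      have heq : (∑' j, ∑ k ∈ Finset.Icc 1 d, a i j k * u j ^ k) -
          ∑ j ∈ Finset.range N, ∑ k ∈ Finset.Icc 1 d, a i j k * u j ^ k =
          ∑' j, ∑ k ∈ Finset.Icc 1 d, a i (j + N) k * u (j + N) ^ k := by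
        have := Summable.sum_add_tsum_nat_add N hsum
        linarith
      rw [Real.dist_eq, heq]
      have hptwise : ∀ j : ℕ, |∑ k ∈ Finset.Icc 1 d, a i (j + N) k * u (j + N) ^ k| ≤
          ∑ k ∈ Finset.Icc 1 d, |a i (j + N) k| * |u (j + N)| ^ k := by
        intro j
        calc |∑ k ∈ Finset.Icc 1 d, a i (j + N) k * u (j + N) ^ k|
            ≤ ∑ k ∈ Finset.Icc 1 d, |a i (j + N) k * u (j + N) ^ k| :=
              Finset.abs_sum_le_sum_abs _ _
          _ = ∑ k ∈ Finset.Icc 1 d, |a i (j + N) k| * |u (j + N)| ^ k := by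
              refine Finset.sum_congr rfl fun k _ => ?_
              rw [abs_mul, abs_pow]
      have habs : |∑' j, ∑ k ∈ Finset.Icc 1 d, a i (j + N) k * u (j + N) ^ k| ≤
          ∑' j, ∑ k ∈ Finset.Icc 1 d, |a i (j + N) k| * |u (j + N)| ^ k := by
        calc |∑' j, ∑ k ∈ Finset.Icc 1 d, a i (j + N) k * u (j + N) ^ k|
            ≤ ∑' j, |∑ k ∈ Finset.Icc 1 d, a i (j + N) k * u (j + N) ^ k| := by
              simpa [Real.norm_eq_abs] using
                norm_tsum_le_tsum_norm (f := fun j =>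
                  ∑ k ∈ Finset.Icc 1 d, a i (j + N) k * u (j + N) ^ k)
                  (by simpa [Real.norm_eq_abs] using hshift.abs)
          _ ≤ ∑' j, ∑ k ∈ Finset.Icc 1 d, |a i (j + N) k| * |u (j + N)| ^ k :=
              Summable.tsum_le_tsum hptwise hshift.abs (hmaj i u hu N)
      have hswap : ∑' j, ∑ k ∈ Finset.Icc 1 d, |a i (j + N) k| * |u (j + N)| ^ k =
          ∑ k ∈ Finset.Icc 1 d, ∑' j, |a i (j + N) k| * |u (j + N)| ^ k :=
        Summable.tsum_finsetSum fun k hk =>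
          (tail_holder (hkq' k hk).1 (hkq' k hk).2 (hA i k hk) (hKsum u hu) (hKt u hu) N).1
      have hfinal : |∑' j, ∑ k ∈ Finset.Icc 1 d, a i (j + N) k * u (j + N) ^ k| ≤ B N := by
        refine habs.trans ?_
        rw [hswap, hBdef]
        refine Finset.sum_le_sum fun k hk => ?_
        exact (tail_holder (hkq' k hk).1 (hkq' k hk).2 (hA i k hk) (hKsum u hu) (hKt u hu) N).2
      exact lt_of_le_of_lt hfinal hN
    refine hunif.continuousOn (Filter.Frequently.of_forall fun N => ?_)
    exact (continuous_finset_sum _ fun j _ => continuous_finset_sum _ fun k _ =>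
      continuous_const.mul ((continuous_apply j).pow k)).continuousOn
  -- closed constraint sets and Cantor intersection
  set C : ℕ → Set (ℕ → ℝ) := fun i =>
    K ∩ (fun u : ℕ → ℝ => ∑' j, ∑ k ∈ Finset.Icc 1 d, a i j k * u j ^ k) ⁻¹' {b i} with hCdef
  have hCc : ∀ i, IsClosed (C i) := fun i =>
    (hGcont i).preimage_isClosed_of_isClosed hKcl isClosed_singleton
  set V : ℕ → Set (ℕ → ℝ) := fun n => K ∩ ⋂ i ∈ Finset.range n, C i with hVdef
  have hVc : ∀ n, IsClosed (V n) := fun n =>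
    hKcl.inter (isClosed_biInter fun i _ => hCc i)
  have hVd : ∀ n, V (n + 1) ⊆ V n := by
    intro n
    refine Set.inter_subset_inter_right _ ?_
    intro x hx
    rw [Set.mem_iInter₂] at hx ⊢
    intro i hi
    exact hx i (Finset.mem_range.2 (lt_trans (Finset.mem_range.1 hi) (Nat.lt_succ_self n)))
  have hVne : ∀ n, (V n).Nonempty := by
    intro n
    obtain ⟨u, h1, h2, h3⟩ := h (Finset.range n)
    have huK : u ∈ K := hmem u h1 h2
    refine ⟨u, huK, ?_⟩
    rw [Set.mem_iInter₂]
    intro i hi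
    exact ⟨huK, h3 i hi⟩
  have hV0 : IsCompact (V 0) := hKc.of_isClosed_subset (hVc 0) Set.inter_subset_left
  obtain ⟨u, hu⟩ := IsCompact.nonempty_iInter_of_sequence_nonempty_isCompact_isClosed
    V hVd hVne hV0 hVc
  rw [Set.mem_iInter] at hu
  have huK : u ∈ K := (hu 0).1
  refine ⟨u, (hmem' u huK).1, (hmem' u huK).2, fun i => ?_⟩
  have hui := (hu (i + 1)).2
  rw [Set.mem_iInter₂] at hui
  exact (hui i (Finset.self_mem_range_succ i)).2
end

section
/- (Rado's selection lemma) Let I be an infinite set and for each i ∈ I let X_i be a nonempty finite set. Suppose that for every nonempty finite subset A of I we are given a choice function φ_A : A → ⋃_{i∈I} X_i with φ_A(a) ∈ X_a for all a ∈ A. Then there exists a choice function Φ : I → ⋃_{i∈I} X_i with Φ(i) ∈ X_i for all i ∈ I, such that for every nonempty finite subset A of I there exists a nonempty finite subset B of I with A ⊆ B and φ_B(a) = Φ(a) for all a ∈ A. -/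
/-- (Rado's selection lemma) Given nonempty finite sets `X i` for `i` in an infinite set `I`,
and a choice function `φ A` for every nonempty finite `A ⊆ I`, there is a global choice
function `Φ` such that every nonempty finite `A ⊆ I` is contained in some nonempty finite
`B ⊆ I` with `φ B` agreeing with `Φ` on `A`. -/
theorem stmt_12 {I : Type*} [Infinite I] {α : Type*} (X : I → Set α)
    (hne : ∀ i, (X i).Nonempty) (hfin : ∀ i, (X i).Finite)
    (φ : ∀ A : Finset I, A.Nonempty → I → α)
    (hφ : ∀ (A : Finset I) (hA : A.Nonempty), ∀ a ∈ A, φ A hA a ∈ X a) :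
    ∃ Φ : I → α, (∀ i, Φ i ∈ X i) ∧
      ∀ A : Finset I, ∀ _hA : A.Nonempty, ∃ B : Finset I, ∃ hB : B.Nonempty,
        A ⊆ B ∧ ∀ a ∈ A, φ B hB a = Φ a := by
  classical
  obtain ⟨U, hU⟩ := Filter.exists_ultrafilter_le (Filter.atTop : Filter (Finset I))
  set T : I → α → Set (Finset I) :=
    fun i x => {B | ∃ hi : i ∈ B, φ B ⟨i, hi⟩ i = x} with hT
  have hmem : ∀ i : I, {B : Finset I | i ∈ B} ∈ U := by
    intro i
    apply hU
    have : {B : Finset I | {i} ≤ B} ∈ (Filter.atTop : Filter (Finset I)) :=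
      Filter.mem_atTop {i}
    refine Filter.mem_of_superset this ?_
    intro B hB
    exact Finset.singleton_subset_iff.mp hB
  have key : ∀ i : I, ∃ x ∈ X i, T i x ∈ U := by
    intro i
    have hsub : {B : Finset I | i ∈ B} ⊆ ⋃ x ∈ X i, T i x := by
      intro B hB
      exact Set.mem_biUnion (hφ B ⟨i, hB⟩ i hB) ⟨hB, rfl⟩
    have : (⋃ x ∈ X i, T i x) ∈ U := Filter.mem_of_superset (hmem i) hsub
    exact ((Ultrafilter.finite_biUnion_mem_iff (hfin i)).mp this).imp
      fun x ⟨hx, h⟩ => ⟨hx, h⟩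
  choose Φ hΦX hΦU using key
  refine ⟨Φ, hΦX, ?_⟩
  intro A hA
  have hAmem : {B : Finset I | A ⊆ B} ∈ U := by
    apply hU
    exact Filter.mem_atTop A
  have hInter : ({B : Finset I | A ⊆ B} ∩ ⋂ a ∈ A, T a (Φ a)) ∈ U := by
    refine Filter.inter_mem hAmem ?_
    exact (Filter.biInter_finset_mem A).mpr fun a _ => hΦU a
  obtain ⟨B, hB1, hB2⟩ := U.nonempty_of_mem hInter
  refine ⟨B, ⟨hA.choose, hB1 hA.choose_spec⟩, hB1, ?_⟩
  intro a ha
  obtain ⟨haB, hval⟩ := Set.mem_iInter₂.mp hB2 a ha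
  exact hval
end

section
/- (de Bruijn–Erdős) Let G be a graph with an infinite vertex set V and let k be a positive integer. If every finite subgraph of G (the induced subgraph on any finite subset of V) is k-colorable, then G is k-colorable. -/
/-- (de Bruijn–Erdős) If every finite induced subgraph of a graph on an infinite vertex set
is `k`-colorable, then the graph is `k`-colorable. -/
theorem stmt_14 {V : Type*} [Infinite V] (G : SimpleGraph V) (k : ℕ) (hk : 0 < k)
    (h : ∀ S : Finset V, (G.induce (S : Set V)).Colorable k) :
    G.Colorable k := by
  have := SimpleGraph.nonempty_hom_of_forall_finite_subgraph_hom (G := G)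
    (F := (⊤ : SimpleGraph (Fin k))) ?_
  · obtain ⟨f⟩ := this
    exact ⟨SimpleGraph.Coloring.mk f (fun {a b} hab => f.map_rel hab)⟩
  · intro G' hfin
    have hS := h hfin.toFinset
    have c := hS.some
    refine SimpleGraph.Hom.comp (c : SimpleGraph.induce (↑hfin.toFinset) G →g ⊤) ?_
    refine ⟨fun v => ⟨v.1, by simp [hfin.mem_toFinset.2 v.2]⟩, ?_⟩
    intro a b hab
    exact G'.adj_sub hab
end

section
/- (Helly, finite form) Let n be a positive integer, let m ≥ n + 2, and let K₁, …, K_m be convex subsets of ℝⁿ. If every n + 1 of the sets K_i have a nonempty intersection, then ⋂_{i=1}^m K_i ≠ ∅. -/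
/-- (Helly, finite form) If `m ≥ n + 2` convex subsets of `ℝⁿ` are such that every `n + 1`
of them have a common point, then all `m` of them have a common point. -/
theorem stmt_16 (n m : ℕ) (hn : 0 < n) (hm : n + 2 ≤ m)
    (K : Fin m → Set (EuclideanSpace ℝ (Fin n)))
    (hconv : ∀ i, Convex ℝ (K i))
    (h : ∀ S : Finset (Fin m), S.card = n + 1 → (⋂ i ∈ S, K i).Nonempty) :
    (⋂ i, K i).Nonempty := by
  have hd : Module.finrank ℝ (EuclideanSpace ℝ (Fin n)) = n := by simp
  have := Convex.helly_theorem (𝕜 := ℝ) (F := K) (s := Finset.univ)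
    (by simp [hd]; omega) (fun i _ ↦ hconv i)
    (fun I _ hI ↦ h I (by rw [hI, hd]))
  simpa using this
end

section
/- (Helly, infinite form) Let n be a positive integer, let I be an infinite index set, and let {K_i : i ∈ I} be a family of closed convex subsets of ℝⁿ at least one of which is compact. If every n + 1 of the sets K_i have a nonempty intersection, then ⋂_{i∈I} K_i ≠ ∅. -/
/-- (Helly, infinite form) If an infinite family of closed convex subsets of `ℝⁿ`, at least
one of which is compact, is such that every `n + 1` of them have a common point, then the
whole family has a common point. -/
theorem stmt_17 (n : ℕ) (hn : 0 < n) {I : Type*} [Infinite I]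
    (K : I → Set (EuclideanSpace ℝ (Fin n)))
    (hclosed : ∀ i, IsClosed (K i)) (hconv : ∀ i, Convex ℝ (K i))
    (hcompact : ∃ i, IsCompact (K i))
    (h : ∀ S : Finset I, S.card = n + 1 → (⋂ i ∈ S, K i).Nonempty) :
    (⋂ i, K i).Nonempty := by
  classical
  have hrank : Module.finrank ℝ (EuclideanSpace ℝ (Fin n)) = n :=
    finrank_euclideanSpace_fin
  have h_fin : ∀ S : Finset I, (⋂ i ∈ S, K i).Nonempty := by
    intro S
    apply Convex.helly_theorem' (𝕜 := ℝ) (fun i _ ↦ hconv i)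
    intro J _ hJcard
    rw [hrank] at hJcard
    obtain ⟨J', hJJ', hJ'card⟩ := Infinite.exists_superset_card_eq J (n + 1) hJcard
    exact (h J' hJ'card).mono (Set.biInter_mono hJJ' fun _ _ ↦ Set.Subset.rfl)
  obtain ⟨i0, hi0⟩ := hcompact
  rw [show ⋂ i, K i = K i0 ∩ ⋂ i, K i by simp [Set.iInter_subset]]
  apply hi0.inter_iInter_nonempty _ hclosed
  intro S
  simpa using h_fin ({i0} ∪ S)
end
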